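/- arXiv:1011.5066 — 2 statements merged into one kernel-verified Lean document; each statement's English description precedes it below -/
import Mathlib

section
/- Let $\mu$ be a probability measure on a measure space, let $M \geq 1$ be a constant, and let $f$ be a measurable function with $0 < f \leq M$ and $\ln f \in L^2(\mu)$. Set $g = \ln f - \int \ln f \, d\mu$. Then $\left| \ln \int f \, d\mu - \int \ln f \, d\mu \right| \leq \frac{M \|g\|_{L^2(\mu)}}{\int f \, d\mu}$. -/
/-! With `A = ∫ f` and `m = ∫ log f`, Jensen's inequality for `exp` gives `m ≤ log A`, and for the
convex function `x log x` it gives `A log A ≤ ∫ f log f`, that is `A (log A - m) ≤ ∫ f g`.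
As `g` has mean zero, `∫ f g = ∫ (f - A) g`, and `|f - A| ≤ M` because `f` and `A` both lie in
`(0, M]`; hence `∫ f g ≤ M ‖g‖₁ ≤ M ‖g‖₂`. -/

open MeasureTheory

namespace MeasureTheory

variable {α : Type*} [MeasurableSpace α] {μ : Measure α}

theorem integral_log_le_log_integral [IsProbabilityMeasure μ] {f : α → ℝ}
    (hf_pos : ∀ᵐ x ∂μ, 0 < f x) (hf : Integrable f μ)
    (hlog : Integrable (fun x => Real.log (f x)) μ) :
    ∫ x, Real.log (f x) ∂μ ≤ Real.log (∫ x, f x ∂μ) := by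
  have h_exp_log : (fun x => Real.exp (Real.log (f x))) =ᵐ[μ] f := by
    filter_upwards [hf_pos] with x hx using Real.exp_log hx
  have hjensen := convexOn_exp.map_integral_le Real.continuous_exp.continuousOn isClosed_univ
    (ae_of_all _ fun _ => Set.mem_univ _) hlog (hf.congr h_exp_log.symm)
  rw [integral_congr_ae h_exp_log] at hjensen
  simpa using Real.log_le_log (Real.exp_pos _) hjensen

theorem mul_log_integral_le_integral_mul_log [IsProbabilityMeasure μ] {f : α → ℝ}
    (hf_nonneg : ∀ᵐ x ∂μ, 0 ≤ f x) (hf : Integrable f μ)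
    (hflog : Integrable (fun x => f x * Real.log (f x)) μ) :
    (∫ x, f x ∂μ) * Real.log (∫ x, f x ∂μ) ≤ ∫ x, f x * Real.log (f x) ∂μ :=
  Real.convexOn_mul_log.map_integral_le Real.continuous_mul_log.continuousOn isClosed_Ici
    hf_nonneg hf hflog

theorem integral_abs_le_toReal_eLpNorm_two [IsProbabilityMeasure μ] {g : α → ℝ}
    (hg : MemLp g 2 μ) : ∫ x, |g x| ∂μ ≤ (eLpNorm g 2 μ).toReal := by
  have h_one : ∫ x, |g x| ∂μ = (eLpNorm g 1 μ).toReal := by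
    rw [eLpNorm_one_eq_lintegral_enorm]
    exact integral_norm_eq_lintegral_enorm hg.aestronglyMeasurable
  rw [h_one]
  exact ENNReal.toReal_mono hg.eLpNorm_ne_top
    (eLpNorm_le_eLpNorm_of_exponent_le one_le_two hg.aestronglyMeasurable)

theorem integral_mul_le_mul_integral_abs_of_integral_eq_zero {f g : α → ℝ} {c M : ℝ}
    (hf : AEStronglyMeasurable f μ) (hfc : ∀ᵐ x ∂μ, |f x - c| ≤ M)
    (hg : Integrable g μ) (hg_zero : ∫ x, g x ∂μ = 0) :
    ∫ x, f x * g x ∂μ ≤ M * ∫ x, |g x| ∂μ := by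
  have hfcg : Integrable (fun x => (f x - c) * g x) μ :=
    hg.bdd_mul (hf.sub aestronglyMeasurable_const) (c := M) (by simpa using hfc)
  calc ∫ x, f x * g x ∂μ = ∫ x, ((f x - c) * g x + c * g x) ∂μ := by congr 1 with x; ring
    _ = ∫ x, (f x - c) * g x ∂μ := by
      rw [integral_add hfcg (hg.const_mul c), integral_const_mul, hg_zero, mul_zero, add_zero]
    _ ≤ ∫ x, M * |g x| ∂μ := by
      refine integral_mono_ae hfcg (hg.abs.const_mul M) ?_
      filter_upwards [hfc] with x hx
      calc (f x - c) * g x ≤ |f x - c| * |g x| := by rw [← abs_mul]; exact le_abs_self _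
        _ ≤ M * |g x| := mul_le_mul_of_nonneg_right hx (abs_nonneg _)
    _ = M * ∫ x, |g x| ∂μ := integral_const_mul M _

end MeasureTheory

theorem stmt_0_general {α : Type*} [MeasurableSpace α] (μ : Measure α) [IsProbabilityMeasure μ]
    (M : ℝ) (f : α → ℝ)
    (hf_pos : ∀ x, 0 < f x) (hf_le : ∀ x, f x ≤ M)
    (hf_int : Integrable f μ) (hf_int_pos : 0 < ∫ x, f x ∂μ)
    (hlog : MemLp (fun x => Real.log (f x)) 2 μ)
    (g : α → ℝ) (hg : g = fun x => Real.log (f x) - ∫ y, Real.log (f y) ∂μ) :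
    |Real.log (∫ x, f x ∂μ) - ∫ x, Real.log (f x) ∂μ| ≤
      M * (eLpNorm g 2 μ).toReal / ∫ x, f x ∂μ := by
  set A := ∫ x, f x ∂μ
  set m := ∫ x, Real.log (f x) ∂μ
  have hAM : A ≤ M := by simpa using integral_mono hf_int (integrable_const M) hf_le
  have hlog_int : Integrable (fun x => Real.log (f x)) μ := hlog.integrable one_le_two
  have hflog : Integrable (fun x => f x * Real.log (f x)) μ :=
    hlog_int.bdd_mul hf_int.aestronglyMeasurable (c := M)
      (ae_of_all _ fun x => by rw [Real.norm_eq_abs, abs_of_pos (hf_pos x)]; exact hf_le x)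
  have hg2 : MemLp g 2 μ := hg ▸ hlog.sub (memLp_const m)
  have hg_zero : ∫ x, g x ∂μ = 0 := by simp [hg, integral_sub hlog_int (integrable_const m), m]
  have h_fg : ∫ x, f x * g x ∂μ = ∫ x, f x * Real.log (f x) ∂μ - A * m := by
    simp_rw [hg, mul_sub]
    rw [integral_sub hflog (hf_int.mul_const m), integral_mul_const]
  have h_entropy : A * Real.log A ≤ ∫ x, f x * Real.log (f x) ∂μ :=
    mul_log_integral_le_integral_mul_log (ae_of_all _ fun x => (hf_pos x).le) hf_int hflog
  have h_osc : ∫ x, f x * g x ∂μ ≤ M * ∫ x, |g x| ∂μ :=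
    integral_mul_le_mul_integral_abs_of_integral_eq_zero hf_int.aestronglyMeasurable
      (ae_of_all _ fun x => abs_sub_le_of_nonneg_of_le (hf_pos x).le (hf_le x) hf_int_pos.le hAM)
      (hg2.integrable one_le_two) hg_zero
  have h_jensen : m ≤ Real.log A :=
    integral_log_le_log_integral (ae_of_all _ hf_pos) hf_int hlog_int
  rw [abs_of_nonneg (sub_nonneg.2 h_jensen), le_div_iff₀ hf_int_pos]
  calc (Real.log A - m) * A = A * Real.log A - A * m := by ring
    _ ≤ ∫ x, f x * g x ∂μ := by linarith
    _ ≤ M * ∫ x, |g x| ∂μ := h_osc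
    _ ≤ M * (eLpNorm g 2 μ).toReal :=
      mul_le_mul_of_nonneg_left (integral_abs_le_toReal_eLpNorm_two hg2) (hf_int_pos.le.trans hAM)

/-- Nash-type inequality: for a probability measure `μ`, `M ≥ 1`, and a measurable
function `f` with `0 < f ≤ M`, integrable, with `log f ∈ L²(μ)`, setting
`g = log f - ∫ log f dμ`, one has
`|log ∫ f dμ - ∫ log f dμ| ≤ M ‖g‖_{L²(μ)} / ∫ f dμ`. -/
theorem stmt_0 {α : Type*} [MeasurableSpace α] (μ : Measure α) [IsProbabilityMeasure μ]
    (M : ℝ) (hM : 1 ≤ M) (f : α → ℝ) (hf_meas : Measurable f)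
    (hf_pos : ∀ x, 0 < f x) (hf_le : ∀ x, f x ≤ M)
    (hf_int : Integrable f μ) (hf_int_pos : 0 < ∫ x, f x ∂μ)
    (hlog : MemLp (fun x => Real.log (f x)) 2 μ)
    (g : α → ℝ) (hg : g = fun x => Real.log (f x) - ∫ y, Real.log (f y) ∂μ) :
    |Real.log (∫ x, f x ∂μ) - ∫ x, Real.log (f x) ∂μ| ≤
      M * (eLpNorm g 2 μ).toReal / ∫ x, f x ∂μ :=
  stmt_0_general μ M f hf_pos hf_le hf_int hf_int_pos hlog g hg
end

section
/- Let $u : \mathbb{R}^3 \times (-\infty, 0] \to \mathbb{R}^3$ be a vector field of the form $u(x,t) = (l_1(t), l_2(t), l_3(t))$ depending only on time, and suppose $u = \nabla \times B$ for a vector field $B(\cdot, t)$ with $\sup_t \|B(\cdot,t)\|_{BMO} < \infty$, where each component of $B(\cdot, t)$ is harmonic in $x$ (which holds since $\Delta B = -\nabla \times u = 0$ when $\mathrm{div}\, B = 0$). Then $u \equiv 0$. -/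
/-!
For each `t`, every component of the constant `l t` has the form `∂ᵢ f - ∂ⱼ g = c` with `f`, `g`
components of `B t`. Green's theorem on the square `x + [0, S] eᵢ + [0, S] eⱼ` writes `c S²` as an
integral over `[0, S]` of increments `f (x + a) - f (x + b)` and `g (x + a) - g (x + b)` with
`‖a‖, ‖b‖ ≤ 2 S`. Averaged over `x` in a ball of radius `S`, such an increment is controlled by the
mean oscillation on the concentric ball of radius `3 S`, that is by `3ᵈ N` times the volume of the
ball. Hence `|c| S ≤ 4 · 3ᵈ N` for every `S > 0`, and `c = 0`.
-/

open MeasureTheory Metric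

/-- Partial derivative along the `i`-th coordinate direction. -/
noncomputable def pd (i : Fin 3) (f : EuclideanSpace ℝ (Fin 3) → ℝ)
    (x : EuclideanSpace ℝ (Fin 3)) : ℝ :=
  fderiv ℝ f x (EuclideanSpace.single i 1)

/-- The curl of a vector field on `ℝ³`. -/
noncomputable def curl (F : EuclideanSpace ℝ (Fin 3) → EuclideanSpace ℝ (Fin 3))
    (x : EuclideanSpace ℝ (Fin 3)) : EuclideanSpace ℝ (Fin 3) :=
  (WithLp.equiv 2 (Fin 3 → ℝ)).symm
    ![pd 1 (fun y => F y 2) x - pd 2 (fun y => F y 1) x,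
      pd 2 (fun y => F y 0) x - pd 0 (fun y => F y 2) x,
      pd 0 (fun y => F y 1) x - pd 1 (fun y => F y 0) x]

/-- The divergence of a vector field on `ℝ³`. -/
noncomputable def div3 (F : EuclideanSpace ℝ (Fin 3) → EuclideanSpace ℝ (Fin 3))
    (x : EuclideanSpace ℝ (Fin 3)) : ℝ :=
  ∑ i : Fin 3, pd i (fun y => F y i) x

/-- The Laplacian of a scalar function on `ℝ³`. -/
noncomputable def laplacian (f : EuclideanSpace ℝ (Fin 3) → ℝ)
    (x : EuclideanSpace ℝ (Fin 3)) : ℝ :=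
  ∑ i : Fin 3, iteratedFDeriv ℝ 2 f x ![EuclideanSpace.single i 1, EuclideanSpace.single i 1]

theorem eq_zero_of_forall_abs_mul_le {c K : ℝ} (h : ∀ S > 0, |c| * S ≤ K) : c = 0 := by
  by_contra hc
  have hc' : 0 < |c| := abs_pos.mpr hc
  have := h ((|K| + 1) / |c|) (by positivity)
  rw [mul_div_cancel₀ _ hc'.ne'] at this
  linarith [le_abs_self K]

section Green

variable {E : Type*} [NormedAddCommGroup E] [NormedSpace ℝ E]

theorem integral_square_boundary_eq_const_mul_sq {f g : E → ℝ} (hf : Differentiable ℝ f)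
    (hg : Differentiable ℝ g) {v w : E} {c : ℝ}
    (hc : ∀ y, fderiv ℝ f y v - fderiv ℝ g y w = c) (x : E) (S : ℝ) :
    ∫ u in (0 : ℝ)..S,
      ((f (x + S • v + u • w) - f (x + u • w)) - (g (x + u • v + S • w) - g (x + u • v)))
      = c * S ^ 2 := by
  set L : ℝ × ℝ →L[ℝ] E :=
    (ContinuousLinearMap.fst ℝ ℝ ℝ).smulRight v + (ContinuousLinearMap.snd ℝ ℝ ℝ).smulRight w
  have hL (a b : ℝ) : x + L (a, b) = x + a • v + b • w := by simp [L, add_assoc]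
  have hLd (p : ℝ × ℝ) : HasFDerivAt (fun q => x + L q) L p := L.hasFDerivAt.const_add x
  have hcurl (p : ℝ × ℝ) :
      (fderiv ℝ f (x + L p)).comp L (1, 0) + (-(fderiv ℝ g (x + L p)).comp L) (0, 1) = c := by
    simpa [L, ← sub_eq_add_neg] using hc (x + L p)
  have green := integral2_divergence_prod_of_hasFDerivAt (fun p => f (x + L p))
    (fun p => -g (x + L p)) (fun p => (fderiv ℝ f (x + L p)).comp L)
    (fun p => -(fderiv ℝ g (x + L p)).comp L) 0 0 S S
    (hf.continuous.comp (by fun_prop)).continuousOn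
    (hg.continuous.comp (by fun_prop)).neg.continuousOn
    (fun p _ => (hf _).hasFDerivAt.comp p (hLd p))
    (fun p _ => ((hg _).hasFDerivAt.comp p (hLd p)).neg)
    (by simp only [hcurl]
        exact integrableOn_const (isCompact_uIcc.prod isCompact_uIcc).measure_lt_top.ne)
  simp only [hcurl, intervalIntegral.integral_const, smul_eq_mul] at green
  simp only [hL, intervalIntegral.integral_neg, zero_smul, add_zero] at green
  have hfc := hf.continuous
  have hgc := hg.continuous
  rw [intervalIntegral.integral_sub, intervalIntegral.integral_sub, intervalIntegral.integral_sub]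
  · linear_combination -green
  all_goals exact (by fun_prop : Continuous _).intervalIntegrable _ _

end Green

section BMO

variable {E : Type*} [NormedAddCommGroup E] [MeasurableSpace E] [BorelSpace E]
  {μ : Measure E} [μ.IsAddHaarMeasure]

theorem setIntegral_ball_comp_add_right (f : E → ℝ) (x a : E) (r : ℝ) :
    ∫ z in ball x r, f (z + a) ∂μ = ∫ z in ball (x + a) r, f z ∂μ := by
  have := (measurePreserving_add_right μ a).setIntegral_preimage_emb
    (MeasurableEquiv.addRight a).measurableEmbedding f (ball (x + a) r)
  rwa [preimage_add_right_ball, add_sub_cancel_right] at this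

variable [NormedSpace ℝ E] [FiniteDimensional ℝ E]

theorem measureReal_ball_three_mul (x : E) (r : ℝ) :
    μ.real (ball x (3 * r)) = 3 ^ Module.finrank ℝ E * μ.real (ball x r) := by
  simp only [measureReal_def, Measure.addHaar_ball_mul_of_pos μ x three_pos,
    Measure.addHaar_ball_center μ x, ENNReal.toReal_mul]
  rw [ENNReal.toReal_ofReal (by positivity)]

theorem Continuous.integrableOn_ball {g : E → ℝ} (hg : Continuous g) (x : E) (r : ℝ) :
    IntegrableOn g (ball x r) μ :=
  (hg.continuousOn.integrableOn_compact (isCompact_closedBall x r)).mono_set ball_subset_closedBall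

theorem setIntegral_ball_intervalIntegral_swap {F : E × ℝ → ℝ} (hF : Continuous F) (x : E)
    (r : ℝ) {S : ℝ} (hS : 0 ≤ S) :
    ∫ z in ball x r, (∫ u in (0 : ℝ)..S, F (z, u)) ∂μ =
      ∫ u in (0 : ℝ)..S, ∫ z in ball x r, F (z, u) ∂μ := by
  have hint : Integrable F ((μ.restrict (ball x r)).prod (volume.restrict (Set.Ioc 0 S))) := by
    rw [Measure.prod_restrict]
    exact (hF.continuousOn.integrableOn_compact
      ((isCompact_closedBall x r).prod isCompact_Icc)).mono_set
      (Set.prod_mono ball_subset_closedBall Set.Ioc_subset_Icc_self)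
  simp_rw [intervalIntegral.integral_of_le hS]
  exact integral_integral_swap (f := fun z u => F (z, u)) hint

def BMOWith (μ : Measure E) (N : ℝ) (f : E → ℝ) : Prop :=
  ∀ (x₀ : E) (R : ℝ), 0 < R →
    ∫ x in ball x₀ R, |f x - ⨍ y in ball x₀ R, f y ∂μ| ∂μ ≤ N * μ.real (ball x₀ R)

namespace BMOWith

variable {N : ℝ} {f : E → ℝ}

theorem abs_setIntegral_sub_average_le (hN : BMOWith μ N f) (hf : Continuous f) {x y : E}
    {r : ℝ} (hr : 0 < r) (hxy : dist y x ≤ 2 * r) :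
    |∫ z in ball y r, (f z - ⨍ w in ball x (3 * r), f w ∂μ) ∂μ|
      ≤ 3 ^ Module.finrank ℝ E * N * μ.real (ball x r) := by
  set m := ⨍ w in ball x (3 * r), f w ∂μ
  have hsub : ball y r ⊆ ball x (3 * r) := ball_subset_ball' (by linarith)
  have hint : IntegrableOn (fun z => |f z - m|) (ball x (3 * r)) μ :=
    (hf.sub continuous_const).abs.integrableOn_ball x (3 * r)
  calc |∫ z in ball y r, (f z - m) ∂μ|
      ≤ ∫ z in ball y r, |f z - m| ∂μ := abs_integral_le_integral_abs
    _ ≤ ∫ z in ball x (3 * r), |f z - m| ∂μ :=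
        setIntegral_mono_set hint (.of_forall fun _ => abs_nonneg _) hsub.eventuallyLE
    _ ≤ N * μ.real (ball x (3 * r)) := hN x (3 * r) (by positivity)
    _ = 3 ^ Module.finrank ℝ E * N * μ.real (ball x r) := by
        rw [measureReal_ball_three_mul]; ring

theorem abs_setIntegral_comp_add_sub_comp_add_le (hN : BMOWith μ N f) (hf : Continuous f)
    (x : E) {r : ℝ} (hr : 0 < r) {a b : E} (ha : ‖a‖ ≤ 2 * r) (hb : ‖b‖ ≤ 2 * r) :
    |∫ z in ball x r, (f (z + a) - f (z + b)) ∂μ|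
      ≤ 2 * 3 ^ Module.finrank ℝ E * N * μ.real (ball x r) := by
  set m := ⨍ w in ball x (3 * r), f w ∂μ
  have hshift (c : E) (hc : ‖c‖ ≤ 2 * r) :
      |∫ z in ball x r, (f (z + c) - m) ∂μ| ≤ 3 ^ Module.finrank ℝ E * N * μ.real (ball x r) := by
    rw [setIntegral_ball_comp_add_right (fun z => f z - m)]
    exact hN.abs_setIntegral_sub_average_le hf hr (by simpa using hc)
  have hint (c : E) : IntegrableOn (fun z => f (z + c) - m) (ball x r) μ :=
    ((hf.comp (continuous_add_const c)).sub continuous_const).integrableOn_ball x r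
  calc |∫ z in ball x r, (f (z + a) - f (z + b)) ∂μ|
      = |(∫ z in ball x r, (f (z + a) - m) ∂μ) - ∫ z in ball x r, (f (z + b) - m) ∂μ| := by
        rw [← integral_sub (hint a) (hint b)]; simp only [sub_sub_sub_cancel_right]
    _ ≤ |∫ z in ball x r, (f (z + a) - m) ∂μ| + |∫ z in ball x r, (f (z + b) - m) ∂μ| :=
        abs_sub _ _
    _ ≤ 2 * 3 ^ Module.finrank ℝ E * N * μ.real (ball x r) := by
        linarith [hshift a ha, hshift b hb]

variable {g : E → ℝ} {v w : E} {c : ℝ}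

theorem abs_mul_le_of_fderiv_sub_fderiv_eq (hNf : BMOWith μ N f) (hNg : BMOWith μ N g)
    (hf : Differentiable ℝ f) (hg : Differentiable ℝ g) (hv : ‖v‖ ≤ 1) (hw : ‖w‖ ≤ 1)
    (hc : ∀ y, fderiv ℝ f y v - fderiv ℝ g y w = c) {S : ℝ} (hS : 0 < S) :
    |c| * S ≤ 4 * 3 ^ Module.finrank ℝ E * N := by
  have hfc := hf.continuous
  have hgc := hg.continuous
  set V := μ.real (ball (0 : E) S)
  set H : E × ℝ → ℝ := fun p =>
    (f (p.1 + S • v + p.2 • w) - f (p.1 + p.2 • w)) -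
      (g (p.1 + p.2 • v + S • w) - g (p.1 + p.2 • v))
  have hV : 0 < V := ENNReal.toReal_pos (measure_ball_pos μ 0 hS).ne' measure_ball_lt_top.ne
  have hnorm {a b : ℝ} (ha : |a| ≤ S) (hb : |b| ≤ S) : ‖a • v + b • w‖ ≤ 2 * S := by
    calc ‖a • v + b • w‖ ≤ |a| * ‖v‖ + |b| * ‖w‖ := by
          simpa [norm_smul] using norm_add_le (a • v) (b • w)
      _ ≤ S * 1 + S * 1 := by gcongr
      _ = 2 * S := by ring
  have hS' : |S| ≤ S := (abs_of_pos hS).le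
  have h0 : |(0 : ℝ)| ≤ S := by simpa using hS.le
  have hslice (u : ℝ) (hu : |u| ≤ S) :
      |∫ z in ball 0 S, H (z, u) ∂μ| ≤ 4 * 3 ^ Module.finrank ℝ E * N * V := by
    have hf_shift :=
      hNf.abs_setIntegral_comp_add_sub_comp_add_le hfc 0 hS (hnorm hS' hu) (hnorm h0 hu)
    have hg_shift :=
      hNg.abs_setIntegral_comp_add_sub_comp_add_le hgc 0 hS (hnorm hu hS') (hnorm hu h0)
    simp only [zero_smul, zero_add, add_zero, ← add_assoc] at hf_shift hg_shift
    rw [integral_sub ((by fun_prop : Continuous _).integrableOn_ball 0 S)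
      ((by fun_prop : Continuous _).integrableOn_ball 0 S)]
    linarith [abs_sub (∫ z in ball 0 S, (f (z + S • v + u • w) - f (z + u • w)) ∂μ)
      (∫ z in ball 0 S, (g (z + u • v + S • w) - g (z + u • v)) ∂μ)]
  have hcirc : c * S ^ 2 * V = ∫ u in (0 : ℝ)..S, ∫ z in ball 0 S, H (z, u) ∂μ := by
    rw [← setIntegral_ball_intervalIntegral_swap (by simp only [H]; fun_prop) 0 S hS.le]
    simp only [H, integral_square_boundary_eq_const_mul_sq hf hg hc, setIntegral_const,
      smul_eq_mul]
    ring
  have hbound : |c * S ^ 2 * V| ≤ 4 * 3 ^ Module.finrank ℝ E * N * V * |S - 0| := by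
    rw [hcirc, ← Real.norm_eq_abs]
    refine intervalIntegral.norm_integral_le_of_norm_le_const fun u hu => ?_
    rw [Set.uIoc_of_le hS.le] at hu
    exact hslice u (abs_le.mpr ⟨by linarith [hu.1], hu.2⟩)
  rw [abs_mul, abs_mul, abs_of_pos hV, abs_of_pos (by positivity : 0 < S ^ 2), sub_zero,
    abs_of_pos hS] at hbound
  refine le_of_mul_le_mul_right ?_ (mul_pos hS hV)
  linear_combination hbound

theorem eq_zero_of_fderiv_sub_fderiv_eq (hNf : BMOWith μ N f) (hNg : BMOWith μ N g)
    (hf : Differentiable ℝ f) (hg : Differentiable ℝ g) (hv : ‖v‖ ≤ 1) (hw : ‖w‖ ≤ 1)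
    (hc : ∀ y, fderiv ℝ f y v - fderiv ℝ g y w = c) : c = 0 :=
  eq_zero_of_forall_abs_mul_le fun _ hS =>
    hNf.abs_mul_le_of_fderiv_sub_fderiv_eq hNg hf hg hv hw hc hS

end BMOWith

end BMO

theorem eq_zero_of_curl_eq_of_bmoWith {F : EuclideanSpace ℝ (Fin 3) → EuclideanSpace ℝ (Fin 3)}
    {l : EuclideanSpace ℝ (Fin 3)} {N : ℝ} (hF : Differentiable ℝ F) (hcurl : ∀ x, curl F x = l)
    (hBMO : ∀ i, BMOWith volume N fun y => F y i) : l = 0 := by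
  have hFi (i : Fin 3) : Differentiable ℝ fun y => F y i := by fun_prop
  have hei (i : Fin 3) : ‖EuclideanSpace.single i (1 : ℝ)‖ ≤ 1 := by simp
  have hcomp (x) := congrArg (fun v : EuclideanSpace ℝ (Fin 3) => (v 0, v 1, v 2)) (hcurl x)
  simp only [curl, Prod.mk.injEq] at hcomp
  ext i
  fin_cases i
  · exact (hBMO 2).eq_zero_of_fderiv_sub_fderiv_eq (hBMO 1) (hFi 2) (hFi 1) (hei 1) (hei 2)
      fun x => (hcomp x).1
  · exact (hBMO 0).eq_zero_of_fderiv_sub_fderiv_eq (hBMO 2) (hFi 0) (hFi 2) (hei 2) (hei 0)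
      fun x => (hcomp x).2.1
  · exact (hBMO 1).eq_zero_of_fderiv_sub_fderiv_eq (hBMO 0) (hFi 1) (hFi 0) (hei 0) (hei 1)
      fun x => (hcomp x).2.2

theorem stmt_19_general (l : ℝ → EuclideanSpace ℝ (Fin 3))
    (B : ℝ → EuclideanSpace ℝ (Fin 3) → EuclideanSpace ℝ (Fin 3))
    (hB_smooth : ∀ t ≤ (0 : ℝ), ContDiff ℝ 2 (B t))
    (hcurl : ∀ t ≤ (0 : ℝ), ∀ x, curl (B t) x = l t)
    (hBMO : ∃ N : ℝ, ∀ t ≤ (0 : ℝ), ∀ i : Fin 3,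
      ∀ (x0 : EuclideanSpace ℝ (Fin 3)) (R : ℝ), 0 < R →
        ∫ x in ball x0 R, |B t x i - ⨍ y in ball x0 R, B t y i| ≤
          N * (volume (ball x0 R)).toReal) :
    ∀ t ≤ (0 : ℝ), l t = 0 := by
  obtain ⟨N, hN⟩ := hBMO
  intro t ht
  exact eq_zero_of_curl_eq_of_bmoWith ((hB_smooth t ht).differentiable two_ne_zero) (hcurl t ht)
    (hN t ht)

/-- A space-independent ancient velocity field `u(x,t) = l(t)` which is the curl of a
divergence-free stream field `B(·,t)` with harmonic components and uniformly bounded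
BMO seminorm must vanish identically. -/
theorem stmt_19 (l : ℝ → EuclideanSpace ℝ (Fin 3))
    (B : ℝ → EuclideanSpace ℝ (Fin 3) → EuclideanSpace ℝ (Fin 3))
    (hB_smooth : ∀ t ≤ (0 : ℝ), ContDiff ℝ 2 (B t))
    (hB_div : ∀ t ≤ (0 : ℝ), ∀ x, div3 (B t) x = 0)
    (hcurl : ∀ t ≤ (0 : ℝ), ∀ x, curl (B t) x = l t)
    (hharm : ∀ t ≤ (0 : ℝ), ∀ i : Fin 3, ∀ x, laplacian (fun y => B t y i) x = 0)
    (hB_loc : ∀ t ≤ (0 : ℝ), ∀ i : Fin 3,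
      LocallyIntegrable (fun x => B t x i) volume)
    (hBMO : ∃ N : ℝ, ∀ t ≤ (0 : ℝ), ∀ i : Fin 3,
      ∀ (x0 : EuclideanSpace ℝ (Fin 3)) (R : ℝ), 0 < R →
        ∫ x in ball x0 R, |B t x i - ⨍ y in ball x0 R, B t y i| ≤
          N * (volume (ball x0 R)).toReal) :
    ∀ t ≤ (0 : ℝ), l t = 0 :=
  stmt_19_general l B hB_smooth hcurl hBMO
end
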